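/- arXiv:2211.02781 — 2 statements merged into one kernel-verified Lean document; each statement's English description precedes it below -/
import Mathlib

section
/- Let W, V be invertible q×q matrices and A, B be s×q matrices. Set c = ‖V^{−1}‖_∞, φ₁ = ‖W^{−1} − V^{−1}‖_∞, φ₂ = ‖W − V‖_∞, φ₃ = ‖A − B‖_∞, and φ = ‖A W^{−1} − B V^{−1}‖_∞, and let φ_B = ‖B V^{−1}‖_∞. Then φ ≤ φ₃ φ₁ + φ_B φ₂ (c + φ₁) + φ₃ c. If moreover φ₂ c < 1, then φ ≤ (φ₃ + φ_B φ₂) · c / (1 − φ₂ c). -/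
/-!
Both parts come from the identity
`A W⁻¹ - B V⁻¹ = (A - B)(W⁻¹ - V⁻¹) + B V⁻¹ (V - W) W⁻¹ + (A - B) V⁻¹`
and submultiplicativity of the row-sum norm, with `‖W⁻¹‖ ≤ c + φ₁`; the three terms add up to
`(φ₃ + φ_B φ₂)(c + φ₁)`. For the second part, `W⁻¹ - V⁻¹ = V⁻¹ (V - W) W⁻¹` gives
`φ₁ ≤ φ₂ c (c + φ₁)`, i.e. `c + φ₁ ≤ c / (1 - φ₂ c)`.
-/

open Matrix

attribute [local instance] Matrix.linftyOpNormedAddCommGroup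

/-- The maximum absolute row sum norm (operator norm induced by the `ℓ∞` vector norm). -/
noncomputable def rowSumNorm {s q : ℕ} (M : Matrix (Fin s) (Fin q) ℝ) : ℝ :=
  ⨆ i, ∑ j, |M i j|

lemma rowSumNorm_eq_norm {s q : ℕ} (M : Matrix (Fin s) (Fin q) ℝ) : rowSumNorm M = ‖M‖ := by
  rw [Matrix.linfty_opNorm_def, rowSumNorm, Finset.sup_univ_eq_ciSup, NNReal.coe_iSup]
  simp [Real.norm_eq_abs]

namespace Matrix

variable {m n R : Type*} [Fintype n] [DecidableEq n]

section CommRing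

variable [CommRing R] {W V : Matrix n n R}

theorem inv_sub_inv_eq_inv_mul_sub_mul_inv (hW : IsUnit W.det) (hV : IsUnit V.det) :
    W⁻¹ - V⁻¹ = V⁻¹ * (V - W) * W⁻¹ := by
  rw [Matrix.mul_sub, Matrix.sub_mul, nonsing_inv_mul V hV, Matrix.one_mul, Matrix.mul_assoc,
    mul_nonsing_inv W hW, Matrix.mul_one]

theorem mul_inv_sub_mul_inv_eq (hW : IsUnit W.det) (hV : IsUnit V.det) (A B : Matrix m n R) :
    A * W⁻¹ - B * V⁻¹ =
      (A - B) * (W⁻¹ - V⁻¹) + B * V⁻¹ * (V - W) * W⁻¹ + (A - B) * V⁻¹ := by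
  rw [Matrix.mul_assoc B, Matrix.mul_assoc B, ← inv_sub_inv_eq_inv_mul_sub_mul_inv hW hV]
  simp only [Matrix.sub_mul, Matrix.mul_sub]
  abel

end CommRing

variable [Fintype m] [NormedCommRing R] {W V : Matrix n n R}

theorem linfty_opNorm_mul_inv_sub_mul_inv_le (hW : IsUnit W.det) (hV : IsUnit V.det)
    (A B : Matrix m n R) :
    ‖A * W⁻¹ - B * V⁻¹‖ ≤
      ‖A - B‖ * ‖W⁻¹ - V⁻¹‖ + ‖B * V⁻¹‖ * ‖W - V‖ * (‖V⁻¹‖ + ‖W⁻¹ - V⁻¹‖) +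
        ‖A - B‖ * ‖V⁻¹‖ := by
  have hWinv : ‖W⁻¹‖ ≤ ‖V⁻¹‖ + ‖W⁻¹ - V⁻¹‖ := norm_le_norm_add_norm_sub' _ _
  have hmiddle : ‖B * V⁻¹ * (V - W) * W⁻¹‖ ≤
      ‖B * V⁻¹‖ * ‖W - V‖ * (‖V⁻¹‖ + ‖W⁻¹ - V⁻¹‖) :=
    calc ‖B * V⁻¹ * (V - W) * W⁻¹‖ ≤ ‖B * V⁻¹‖ * ‖V - W‖ * ‖W⁻¹‖ := by
          grw [linfty_opNorm_mul, linfty_opNorm_mul]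
      _ ≤ ‖B * V⁻¹‖ * ‖W - V‖ * (‖V⁻¹‖ + ‖W⁻¹ - V⁻¹‖) := by
          rw [norm_sub_rev V W]; gcongr
  rw [mul_inv_sub_mul_inv_eq hW hV]
  grw [norm_add₃_le, linfty_opNorm_mul (A - B), linfty_opNorm_mul (A - B), hmiddle]

theorem linfty_opNorm_inv_add_norm_inv_sub_inv_le (hW : IsUnit W.det) (hV : IsUnit V.det)
    (h : ‖W - V‖ * ‖V⁻¹‖ < 1) :
    ‖V⁻¹‖ + ‖W⁻¹ - V⁻¹‖ ≤ ‖V⁻¹‖ / (1 - ‖W - V‖ * ‖V⁻¹‖) := by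
  have hsub : ‖W⁻¹ - V⁻¹‖ ≤ ‖V⁻¹‖ * ‖W - V‖ * (‖V⁻¹‖ + ‖W⁻¹ - V⁻¹‖) :=
    calc ‖W⁻¹ - V⁻¹‖ ≤ ‖V⁻¹‖ * ‖V - W‖ * ‖W⁻¹‖ := by
          grw [inv_sub_inv_eq_inv_mul_sub_mul_inv hW hV, linfty_opNorm_mul, linfty_opNorm_mul]
      _ ≤ ‖V⁻¹‖ * ‖W - V‖ * (‖V⁻¹‖ + ‖W⁻¹ - V⁻¹‖) := by
          rw [norm_sub_rev V W]; gcongr; exact norm_le_norm_add_norm_sub' _ _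
  rw [le_div_iff₀ (by linarith)]
  linarith

end Matrix

theorem stmt_4_general {s q : ℕ}
    (W V : Matrix (Fin q) (Fin q) ℝ) (A B : Matrix (Fin s) (Fin q) ℝ)
    (hW : IsUnit W.det) (hV : IsUnit V.det)
    (c φ₁ φ₂ φ₃ φ φB : ℝ)
    (hc : c = rowSumNorm V⁻¹)
    (hφ₁ : φ₁ = rowSumNorm (W⁻¹ - V⁻¹))
    (hφ₂ : φ₂ = rowSumNorm (W - V))
    (hφ₃ : φ₃ = rowSumNorm (A - B))
    (hφ : φ = rowSumNorm (A * W⁻¹ - B * V⁻¹))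
    (hφB : φB = rowSumNorm (B * V⁻¹)) :
    φ ≤ φ₃ * φ₁ + φB * φ₂ * (c + φ₁) + φ₃ * c ∧
      (φ₂ * c < 1 → φ ≤ (φ₃ + φB * φ₂) * c / (1 - φ₂ * c)) := by
  simp only [rowSumNorm_eq_norm] at hc hφ₁ hφ₂ hφ₃ hφ hφB
  subst hc hφ₁ hφ₂ hφ₃ hφ hφB
  have hbound := linfty_opNorm_mul_inv_sub_mul_inv_le hW hV A B
  refine ⟨hbound, fun h => ?_⟩
  have hfactor : ‖A - B‖ * ‖W⁻¹ - V⁻¹‖ + ‖B * V⁻¹‖ * ‖W - V‖ * (‖V⁻¹‖ + ‖W⁻¹ - V⁻¹‖) +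
      ‖A - B‖ * ‖V⁻¹‖ = (‖A - B‖ + ‖B * V⁻¹‖ * ‖W - V‖) * (‖V⁻¹‖ + ‖W⁻¹ - V⁻¹‖) := by ring
  rw [hfactor] at hbound
  grw [hbound, linfty_opNorm_inv_add_norm_inv_sub_inv_le hW hV h, mul_div_assoc]

theorem stmt_4 {s q : ℕ} (hq : 0 < q) (hs : 0 < s)
    (W V : Matrix (Fin q) (Fin q) ℝ) (A B : Matrix (Fin s) (Fin q) ℝ)
    (hW : IsUnit W.det) (hV : IsUnit V.det)
    (c φ₁ φ₂ φ₃ φ φB : ℝ)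
    (hc : c = rowSumNorm V⁻¹)
    (hφ₁ : φ₁ = rowSumNorm (W⁻¹ - V⁻¹))
    (hφ₂ : φ₂ = rowSumNorm (W - V))
    (hφ₃ : φ₃ = rowSumNorm (A - B))
    (hφ : φ = rowSumNorm (A * W⁻¹ - B * V⁻¹))
    (hφB : φB = rowSumNorm (B * V⁻¹)) :
    φ ≤ φ₃ * φ₁ + φB * φ₂ * (c + φ₁) + φ₃ * c ∧
      (φ₂ * c < 1 → φ ≤ (φ₃ + φB * φ₂) * c / (1 - φ₂ * c)) :=
  stmt_4_general W V A B hW hV c φ₁ φ₂ φ₃ φ φB hc hφ₁ hφ₂ hφ₃ hφ hφB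
end

section
/- Let X be an n×p matrix whose rows x_i satisfy ‖x_i‖_∞ ≤ C_x, let f'' : ℝ×ℝ → ℝ be C_L-Lipschitz in its first argument, and let θ̃, θ* ∈ ℝ^p. Then for any t ∈ [0,1] and responses y_i, the vector v(t) = (1/n) Σᵢ xᵢ xᵢ^⊤ [f''((θ* + t(θ̃ − θ*))^⊤ xᵢ, yᵢ) − f''(θ̃^⊤ xᵢ, yᵢ)](θ̃ − θ*) satisfies ‖v(t)‖_∞ ≤ (C_L C_x / n) ‖X(θ̃ − θ*)‖₂². -/
open Finset

lemma sum_segment_mul_sub_sum_mul {ι : Type*} [Fintype ι] (a s u : ι → ℝ) (t : ℝ) :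
    ∑ l, (s l + t * (u l - s l)) * a l - ∑ l, u l * a l
      = -(1 - t) * ∑ l, a l * (u l - s l) := by
  rw [← sum_sub_distrib, mul_sum]
  exact sum_congr rfl fun l _ => by ring

lemma abs_neg_one_sub_mul_le {t : ℝ} (ht0 : 0 ≤ t) (ht1 : t ≤ 1) (w : ℝ) :
    |-(1 - t) * w| ≤ |w| := by
  rw [abs_mul, abs_neg, abs_of_nonneg (sub_nonneg.mpr ht1)]
  exact mul_le_of_le_one_left (abs_nonneg w) (by linarith)

lemma abs_mul_mul_le_mul_sq {c w d CL Cx : ℝ} (hCx : 0 ≤ Cx)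
    (hc : |c| ≤ Cx) (hd : |d| ≤ CL * |w|) :
    |c * w * d| ≤ CL * Cx * w ^ 2 :=
  calc |c * w * d| = |c| * |w| * |d| := by rw [abs_mul, abs_mul]
    _ ≤ Cx * |w| * (CL * |w|) := by gcongr
    _ = CL * Cx * w ^ 2 := by rw [← sq_abs w]; ring

theorem stmt_7_general {n p : ℕ}
    (x : Fin n → Fin p → ℝ) (y : Fin n → ℝ)
    (CL Cx : ℝ) (hCL : 0 ≤ CL) (hCx : 0 ≤ Cx)
    (hx : ∀ i j, |x i j| ≤ Cx)
    (f'' : ℝ → ℝ → ℝ)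
    (hLip : ∀ a b yy : ℝ, |f'' a yy - f'' b yy| ≤ CL * |a - b|)
    (θt θs : Fin p → ℝ) (t : ℝ) (ht0 : 0 ≤ t) (ht1 : t ≤ 1) :
    ∀ j : Fin p,
      |(1 / (n : ℝ)) * ∑ i, x i j * (∑ l, x i l * (θt l - θs l)) *
          (f'' (∑ l, (θs l + t * (θt l - θs l)) * x i l) (y i)
            - f'' (∑ l, θt l * x i l) (y i))|
        ≤ (CL * Cx / (n : ℝ)) * ∑ i, (∑ l, x i l * (θt l - θs l)) ^ 2 := by
  intro j
  set w : Fin n → ℝ := fun i => ∑ l, x i l * (θt l - θs l)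
  have hterm : ∀ i, |x i j * w i *
      (f'' (∑ l, (θs l + t * (θt l - θs l)) * x i l) (y i)
        - f'' (∑ l, θt l * x i l) (y i))| ≤ CL * Cx * w i ^ 2 := fun i =>
    abs_mul_mul_le_mul_sq hCx (hx i j) <| (hLip _ _ _).trans <| by
      rw [sum_segment_mul_sub_sum_mul]
      exact mul_le_mul_of_nonneg_left (abs_neg_one_sub_mul_le ht0 ht1 _) hCL
  calc _ ≤ (1 / (n : ℝ)) * ∑ i, CL * Cx * w i ^ 2 := by
        rw [abs_mul, abs_of_nonneg (by positivity)]
        gcongr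
        exact (abs_sum_le_sum_abs _ _).trans (sum_le_sum fun i _ => hterm i)
    _ = _ := by rw [← mul_sum]; ring

theorem stmt_7 {n p : ℕ} (hn : 0 < n)
    (x : Fin n → Fin p → ℝ) (y : Fin n → ℝ)
    (CL Cx : ℝ) (hCL : 0 ≤ CL) (hCx : 0 ≤ Cx)
    (hx : ∀ i j, |x i j| ≤ Cx)
    (f'' : ℝ → ℝ → ℝ)
    (hLip : ∀ a b yy : ℝ, |f'' a yy - f'' b yy| ≤ CL * |a - b|)
    (θt θs : Fin p → ℝ) (t : ℝ) (ht0 : 0 ≤ t) (ht1 : t ≤ 1) :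
    ∀ j : Fin p,
      |(1 / (n : ℝ)) * ∑ i, x i j * (∑ l, x i l * (θt l - θs l)) *
          (f'' (∑ l, (θs l + t * (θt l - θs l)) * x i l) (y i)
            - f'' (∑ l, θt l * x i l) (y i))|
        ≤ (CL * Cx / (n : ℝ)) * ∑ i, (∑ l, x i l * (θt l - θs l)) ^ 2 :=
  stmt_7_general x y CL Cx hCL hCx hx f'' hLip θt θs t ht0 ht1
end
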